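/- arXiv:1211.2345 — 3 statements merged into one kernel-verified Lean document; each statement's English description precedes it below -/
import Mathlib

section
/- Let Q : ZMod k → R², r : ZMod k → R (with r_i standing for r_{i+1/2}), and e : ZMod k → R² unit vectors, satisfying Q_{i+1} = Q_i + r_i(e_i + e_{i+1}) for all i. Define V_i = Q_i + ℓ e_i and W_i = Q_i − ℓ e_i. Then the signed area Σᵢ det(V_i, V_{i+1}) equals Σᵢ det(W_i, W_{i+1}). -/
theorem stmt_8 (k : ℕ) [NeZero k]
    (Q e : ZMod k → EuclideanSpace ℝ (Fin 2)) (r : ZMod k → ℝ) (ℓ : ℝ)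
    (he : ∀ i, ‖e i‖ = 1)
    (hchain : ∀ i, Q (i + 1) = Q i + r i • (e i + e (i + 1)))
    (V W : ZMod k → EuclideanSpace ℝ (Fin 2))
    (hV : ∀ i, V i = Q i + ℓ • e i) (hW : ∀ i, W i = Q i - ℓ • e i) :
    ∑ i : ZMod k, (V i 0 * V (i + 1) 1 - V i 1 * V (i + 1) 0) =
      ∑ i : ZMod k, (W i 0 * W (i + 1) 1 - W i 1 * W (i + 1) 0) := by
  set f : ZMod k → ℝ := fun i => e i 0 * Q i 1 - e i 1 * Q i 0 with hf
  have key : ∀ i : ZMod k,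
      (V i 0 * V (i + 1) 1 - V i 1 * V (i + 1) 0)
        = (W i 0 * W (i + 1) 1 - W i 1 * W (i + 1) 0) + 2 * ℓ * (f i - f (i + 1)) := by
    intro i
    have hQ0 : Q (i + 1) 0 = Q i 0 + r i * (e i 0 + e (i + 1) 0) := by
      rw [hchain i]; simp [PiLp.add_apply, PiLp.smul_apply, smul_eq_mul, mul_add]
    have hQ1 : Q (i + 1) 1 = Q i 1 + r i * (e i 1 + e (i + 1) 1) := by
      rw [hchain i]; simp [PiLp.add_apply, PiLp.smul_apply, smul_eq_mul, mul_add]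
    simp only [hV, hW, hf, PiLp.add_apply, PiLp.sub_apply, PiLp.smul_apply, smul_eq_mul,
      hQ0, hQ1]
    ring
  have hshift : ∑ i : ZMod k, f (i + 1) = ∑ i : ZMod k, f i :=
    Fintype.sum_equiv (Equiv.addRight 1) _ _ (fun i => rfl)
  rw [Finset.sum_congr rfl (fun i _ => key i), Finset.sum_add_distrib]
  have hz : ∑ i : ZMod k, 2 * ℓ * (f i - f (i + 1)) = 0 := by
    simp only [mul_sub, Finset.sum_sub_distrib]
    rw [← Finset.mul_sum, ← Finset.mul_sum, hshift]
    ring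
  rw [hz, add_zero]
end

section
/- Under the same chain hypotheses (Q_{i+1} = Q_i + r_i(e_i + e_{i+1}), e_i unit vectors, V_i = Q_i + ℓe_i, W_i = Q_i − ℓe_i, cyclic indices), the vector J(V) = Σᵢ |V_i|²(V_{i−1} − V_{i+1}) equals J(W) = Σᵢ |W_i|²(W_{i−1} − W_{i+1}). -/
open scoped RealInnerProductSpace
open Finset

section helpers
variable {k : ℕ} [NeZero k] {n : ℕ}

private lemma shift1' {M : Type*} [AddCommMonoid M] (f : ZMod k → M) :
    ∑ i : ZMod k, f (i + 1) = ∑ i, f i := Equiv.sum_comp (Equiv.addRight 1) f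

private lemma shiftm' {M : Type*} [AddCommMonoid M] (f : ZMod k → M) :
    ∑ i : ZMod k, f (i - 1) = ∑ i, f i := by
  simpa [sub_eq_add_neg] using Equiv.sum_comp (Equiv.addRight (-1 : ZMod k)) f

private lemma keyA' (Q e : ZMod k → EuclideanSpace ℝ (Fin n)) (r : ZMod k → ℝ)
    (he : ∀ i, ‖e i‖ = 1) (hchain : ∀ i, Q (i+1) = Q i + r i • (e i + e (i+1))) (i : ZMod k) :
    ‖Q (i+1)‖^2 - ‖Q i‖^2 = 2*r i*(⟪Q i, e i⟫ + ⟪Q (i+1), e (i+1)⟫) := by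
  have h := hchain i
  rw [h, norm_add_sq_real]
  simp only [inner_add_left, inner_add_right, inner_smul_left, inner_smul_right,
    norm_smul, mul_pow, norm_add_sq_real, real_inner_self_eq_norm_sq, he,
    Real.norm_eq_abs, sq_abs, starRingEnd_apply, star_trivial,
    real_inner_comm (e (i+1)) (e i)]
  ring

private lemma reindex' (X : ZMod k → EuclideanSpace ℝ (Fin n)) :
    ∑ i : ZMod k, (‖X i‖^2) • (X (i-1) - X (i+1))
      = ∑ i : ZMod k, (‖X (i+1)‖^2 - ‖X (i-1)‖^2) • X i := by
  have h1 : ∑ i : ZMod k, (‖X (i+1)‖^2) • X i = ∑ i : ZMod k, (‖X i‖^2) • X (i-1) := by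
    have := shiftm' (fun i => (‖X (i+1)‖^2) • X i)
    simpa using this.symm
  have h2 : ∑ i : ZMod k, (‖X (i-1)‖^2) • X i = ∑ i : ZMod k, (‖X i‖^2) • X (i+1) := by
    have := shift1' (fun i => (‖X (i-1)‖^2) • X i)
    simpa using this.symm
  simp only [smul_sub, sub_smul, Finset.sum_sub_distrib, h1, h2]

end helpers

theorem stmt_9 (k n : ℕ) [NeZero k]
    (Q e : ZMod k → EuclideanSpace ℝ (Fin n)) (r : ZMod k → ℝ) (ℓ : ℝ)
    (he : ∀ i, ‖e i‖ = 1)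
    (hchain : ∀ i, Q (i + 1) = Q i + r i • (e i + e (i + 1)))
    (V W : ZMod k → EuclideanSpace ℝ (Fin n))
    (hV : ∀ i, V i = Q i + ℓ • e i) (hW : ∀ i, W i = Q i - ℓ • e i) :
    ∑ i : ZMod k, (‖V i‖ ^ 2) • (V (i - 1) - V (i + 1)) =
      ∑ i : ZMod k, (‖W i‖ ^ 2) • (W (i - 1) - W (i + 1)) := by
  have hnV : ∀ j, ‖V j‖^2 = ‖Q j‖^2 + 2*ℓ*⟪Q j, e j⟫ + ℓ^2 := by
    intro j
    rw [hV j, norm_add_sq_real, inner_smul_right, norm_smul]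
    simp [he j, mul_pow, sq_abs]
    ring
  have hnW : ∀ j, ‖W j‖^2 = ‖Q j‖^2 - 2*ℓ*⟪Q j, e j⟫ + ℓ^2 := by
    intro j
    rw [hW j, norm_sub_sq_real, inner_smul_right, norm_smul]
    simp [he j, mul_pow, sq_abs]
    ring
  have hΔs : ∀ i : ZMod k, ‖Q (i+1)‖^2 - ‖Q (i-1)‖^2
      = 2*r i*(⟪Q i, e i⟫ + ⟪Q (i+1), e (i+1)⟫)
        + 2*r (i-1)*(⟪Q (i-1), e (i-1)⟫ + ⟪Q i, e i⟫) := by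
    intro i
    have h1 := keyA' Q e r he hchain i
    have h2 := keyA' Q e r he hchain (i-1)
    rw [sub_add_cancel] at h2
    linarith
  have hQd : ∀ i : ZMod k, Q (i-1) - Q (i+1)
      = (-(r (i-1)))•e (i-1) + (-(r (i-1)) - r i)•e i + (-(r i))•e (i+1) := by
    intro i
    have h1 := hchain i
    have h2 := hchain (i-1)
    rw [sub_add_cancel] at h2
    rw [h1, h2]
    module
  rw [reindex' V, reindex' W, ← sub_eq_zero, ← Finset.sum_sub_distrib]
  have step1 : ∑ i : ZMod k,
        ((‖V (i+1)‖^2 - ‖V (i-1)‖^2) • V i - (‖W (i+1)‖^2 - ‖W (i-1)‖^2) • W i)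
      = ∑ i : ZMod k, ((4*ℓ*⟪Q (i+1), e (i+1)⟫) • Q i - (4*ℓ*⟪Q (i-1), e (i-1)⟫) • Q i
          + (2*ℓ*(‖Q (i+1)‖^2 - ‖Q (i-1)‖^2)) • e i) := by
    refine Finset.sum_congr rfl fun i _ => ?_
    rw [hV i, hW i, hnV (i+1), hnV (i-1), hnW (i+1), hnW (i-1)]
    module
  rw [step1, Finset.sum_add_distrib, Finset.sum_sub_distrib]
  have shA : ∑ i : ZMod k, (4*ℓ*⟪Q (i+1), e (i+1)⟫) • Q i
      = ∑ i : ZMod k, (4*ℓ*⟪Q i, e i⟫) • Q (i-1) := by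
    have := shiftm' (fun i => (4*ℓ*⟪Q (i+1), e (i+1)⟫) • Q i)
    simpa using this.symm
  have shB : ∑ i : ZMod k, (4*ℓ*⟪Q (i-1), e (i-1)⟫) • Q i
      = ∑ i : ZMod k, (4*ℓ*⟪Q i, e i⟫) • Q (i+1) := by
    have := shift1' (fun i => (4*ℓ*⟪Q (i-1), e (i-1)⟫) • Q i)
    simpa using this.symm
  rw [shA, shB, ← Finset.sum_sub_distrib]
  have step2 : ∑ i : ZMod k, ((4*ℓ*⟪Q i, e i⟫) • Q (i-1) - (4*ℓ*⟪Q i, e i⟫) • Q (i+1))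
      = ∑ i : ZMod k, ((4*ℓ*⟪Q i, e i⟫*(-(r (i-1)))) • e (i-1)
          + (4*ℓ*⟪Q i, e i⟫*(-(r (i-1)) - r i)) • e i
          + (4*ℓ*⟪Q i, e i⟫*(-(r i))) • e (i+1)) := by
    refine Finset.sum_congr rfl fun i _ => ?_
    rw [← smul_sub, hQd i]
    module
  rw [step2, Finset.sum_add_distrib, Finset.sum_add_distrib]
  have shC : ∑ i : ZMod k, (4*ℓ*⟪Q i, e i⟫*(-(r (i-1)))) • e (i-1)
      = ∑ i : ZMod k, (4*ℓ*⟪Q (i+1), e (i+1)⟫*(-(r i))) • e i := by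
    have := shiftm' (fun i => (4*ℓ*⟪Q (i+1), e (i+1)⟫*(-(r i))) • e i)
    simpa using this
  have shD : ∑ i : ZMod k, (4*ℓ*⟪Q i, e i⟫*(-(r i))) • e (i+1)
      = ∑ i : ZMod k, (4*ℓ*⟪Q (i-1), e (i-1)⟫*(-(r (i-1)))) • e i := by
    have := shift1' (fun i => (4*ℓ*⟪Q (i-1), e (i-1)⟫*(-(r (i-1)))) • e i)
    simpa using this
  rw [shC, shD, ← Finset.sum_add_distrib, ← Finset.sum_add_distrib, ← Finset.sum_add_distrib]
  apply Finset.sum_eq_zero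
  intro i _
  rw [hΔs i]
  module
end

section
/- Let M = Π_{i=1}^{k} (ℓ·E + aᵢ·A(αᵢ)) where A(α) = [[cos α, −sin α],[−sin α, −cos α]] and E is the identity. Then Tr(M), as a polynomial in ℓ, has the form 2(ℓ^k + c₂ℓ^{k−2} + c₄ℓ^{k−4} + ⋯), i.e. all coefficients of ℓ^{k−j} with j odd vanish. -/
/-!
The `i`-th factor is `charmatrix Bᵢ = ℓ - Bᵢ` with `Bᵢ = -aᵢ A(αᵢ)`. As a polynomial with matrix
coefficients the product is monic of degree `k`, so the top coefficient of the trace is `Tr 1 = 2`.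
Each `Bᵢ` is symmetric and traceless, hence anticommutes with `J = !![0, 1; -1, 0]`, so
`J (ℓ - Bᵢ) J⁻¹ = ℓ + Bᵢ = -((-ℓ) - Bᵢ)`. Conjugating the whole product by `J` and taking traces
gives `Tr M (-ℓ) = (-1)ᵏ Tr M (ℓ)`, so the coefficient of `ℓ^(k-j)` vanishes for odd `j`.
-/

open Matrix Polynomial

namespace Polynomial

variable {R : Type*} [CommRing R]

theorem coeff_comp_neg_X (p : R[X]) (n : ℕ) : (p.comp (-X)).coeff n = (-1) ^ n * p.coeff n := by
  rw [← neg_one_mul (X : R[X]), ← C_1, ← C_neg, comp_C_mul_X_coeff, mul_comm]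

theorem coeff_eq_zero_of_comp_neg_X_eq [NoZeroDivisors R] [CharZero R] {p : R[X]} {k n : ℕ}
    (hp : p.comp (-X) = (-1 : R) ^ k • p) (hn : Odd (n + k)) : p.coeff n = 0 := by
  have h := congrArg (coeff · n) hp
  simp only [coeff_comp_neg_X, coeff_smul, smul_eq_mul] at h
  refine CharZero.eq_neg_self_iff.mp ?_
  calc p.coeff n = (-1) ^ n * ((-1) ^ n * p.coeff n) := by
        rw [← mul_assoc, ← pow_add, Even.neg_one_pow ⟨n, rfl⟩, one_mul]
    _ = (-1) ^ (n + k) * p.coeff n := by rw [h, ← mul_assoc, ← pow_add]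
    _ = -p.coeff n := by rw [hn.neg_one_pow, neg_one_mul]

end Polynomial

namespace Matrix

variable {n R : Type*} [Fintype n] [DecidableEq n] [CommRing R]

theorem coeff_trace_list_prod_charmatrix (Bs : List (Matrix n n R)) :
    (trace (Bs.map charmatrix).prod).coeff Bs.length = Fintype.card n := by
  have hlead : ((Bs.map fun B => X - C B).prod).coeff Bs.length = 1 := by
    have h := coeff_list_prod_of_natDegree_le (Bs.map fun B => X - C B) 1
      (by simpa using fun B _ => natDegree_X_sub_C_le B)
    simpa [Function.comp_def] using h
  simp only [trace, diag, finsetSum_coeff, ← matPolyEquiv_coeff_apply, map_list_prod,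
    List.map_map, Function.comp_def, matPolyEquiv_charmatrix, hlead]
  simp

theorem mapMatrix_compRingHom_neg_X_charmatrix (B : Matrix n n R) :
    (compRingHom (-X : R[X])).mapMatrix (charmatrix B) = -charmatrix (-B) := by
  ext i j : 1
  by_cases hij : i = j
  · subst hij
    simp only [RingHom.mapMatrix_apply, coe_compRingHom, map_apply, charmatrix_apply_eq, sub_comp,
      X_comp, C_comp, neg_apply, map_neg, sub_neg_eq_add, neg_add_rev]
    ring
  · simp [hij]

theorem mapMatrix_C_mul_charmatrix_of_anticomm {J B : Matrix n n R} (hJB : J * B = -(B * J)) :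
    C.mapMatrix J * charmatrix B = charmatrix (-B) * C.mapMatrix J := by
  simp only [charmatrix, mul_sub, map_neg, sub_neg_eq_add, ← map_mul, hJB]
  rw [add_mul, map_mul, ← (scalar_commute X (Commute.all X) _).eq]

theorem mapMatrix_compRingHom_neg_X_list_prod_charmatrix {J : Matrix n n R}
    {Bs : List (Matrix n n R)} (hBs : ∀ B ∈ Bs, J * B = -(B * J)) :
    (compRingHom (-X : R[X])).mapMatrix (Bs.map charmatrix).prod * C.mapMatrix J =
      (-1 : R) ^ Bs.length • (C.mapMatrix J * (Bs.map charmatrix).prod) := by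
  induction Bs with
  | nil => simp
  | cons B Bs ih =>
    simp only [List.forall_mem_cons] at hBs
    rw [List.map_cons, List.prod_cons, map_mul, Matrix.mul_assoc, ih hBs.2, mul_smul_comm,
      ← Matrix.mul_assoc, mapMatrix_compRingHom_neg_X_charmatrix, neg_mul,
      ← mapMatrix_C_mul_charmatrix_of_anticomm hBs.1, List.length_cons, pow_succ, mul_neg_one,
      neg_smul, neg_mul, smul_neg, Matrix.mul_assoc]

theorem trace_list_prod_charmatrix_comp_neg_X {J : Matrix n n R} (hJ : IsUnit J)
    {Bs : List (Matrix n n R)} (hBs : ∀ B ∈ Bs, J * B = -(B * J)) :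
    (trace (Bs.map charmatrix).prod).comp (-X) =
      (-1 : R) ^ Bs.length • trace (Bs.map charmatrix).prod := by
  obtain ⟨u, hu⟩ := hJ.map C.mapMatrix
  set P := (Bs.map charmatrix).prod
  have hconj : (compRingHom (-X : R[X])).mapMatrix P =
      (-1 : R) ^ Bs.length • ((u : Matrix n n R[X]) * P * (↑u⁻¹ : Matrix n n R[X])) := by
    rw [← Units.mul_inv_cancel_right ((compRingHom (-X : R[X])).mapMatrix P) u, hu,
      mapMatrix_compRingHom_neg_X_list_prod_charmatrix hBs, ← hu, smul_mul_assoc]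
  rw [← coe_compRingHom_apply, AddMonoidHom.map_trace, ← RingHom.mapMatrix_apply, hconj,
    trace_smul, trace_mul_cycle, Units.inv_mul, Matrix.one_mul]

theorem quarterTurn_mul_eq_neg_mul_quarterTurn {B : Matrix (Fin 2) (Fin 2) R} (hsymm : B.IsSymm)
    (htr : B.trace = 0) : !![0, 1; -1, 0] * B = -(B * !![0, 1; -1, 0]) := by
  have h10 : B 1 0 = B 0 1 := hsymm.apply 0 1
  have h11 : B 1 1 = -B 0 0 := by rw [trace_fin_two] at htr; linear_combination htr
  rw [eta_fin_two B, h10, h11]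
  simp

theorem isUnit_quarterTurn : IsUnit (!![0, 1; -1, 0] : Matrix (Fin 2) (Fin 2) R) := by
  simp [isUnit_iff_isUnit_det, det_fin_two_of]

end Matrix

theorem stmt_15 (k : ℕ) (a α : Fin k → ℝ) :
    let M : Matrix (Fin 2) (Fin 2) (Polynomial ℝ) :=
      (List.ofFn (fun i : Fin k =>
        !![Polynomial.X + Polynomial.C (a i * Real.cos (α i)),
           Polynomial.C (-(a i * Real.sin (α i)));
           Polynomial.C (-(a i * Real.sin (α i))),
           Polynomial.X - Polynomial.C (a i * Real.cos (α i))])).prod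
    (Matrix.trace M).coeff k = 2 ∧
      ∀ j ≤ k, Odd j → (Matrix.trace M).coeff (k - j) = 0 := by
  intro M
  set Bs : List (Matrix (Fin 2) (Fin 2) ℝ) := List.ofFn fun i =>
    !![-(a i * Real.cos (α i)), a i * Real.sin (α i); a i * Real.sin (α i), a i * Real.cos (α i)]
  have hM : M = (Bs.map charmatrix).prod := by
    simp only [M, Bs, List.map_ofFn]
    congr 2
    funext i
    ext r s
    fin_cases r <;> fin_cases s <;> simp [sub_eq_add_neg]
  have hanticomm :
      ∀ B ∈ Bs, (!![0, 1; -1, 0] : Matrix (Fin 2) (Fin 2) ℝ) * B = -(B * !![0, 1; -1, 0]) := by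
    intro B hB
    obtain ⟨i, rfl⟩ := List.mem_ofFn.mp hB
    exact quarterTurn_mul_eq_neg_mul_quarterTurn (by simp [IsSymm.ext_iff])
      (by simp [trace_fin_two])
  have hparity := trace_list_prod_charmatrix_comp_neg_X isUnit_quarterTurn hanticomm
  have hlen : Bs.length = k := List.length_ofFn
  rw [hM, ← hlen]
  refine ⟨by simpa using coeff_trace_list_prod_charmatrix Bs, fun j hj hodd => ?_⟩
  refine coeff_eq_zero_of_comp_neg_X_eq hparity ?_
  rw [show Bs.length - j + Bs.length = j + 2 * (Bs.length - j) by omega]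
  exact hodd.add_even (even_two_mul _)
end
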